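/- (Khinchin lower bound step) Let $(s_l)_{l \ge 1}$ be the Rademacher functions on $[0,1]$ and let $(c_l)_{l \ge 1}$ be real numbers with only finitely many nonzero. Then $\int_0^1 \big|\sum_l c_l s_l(t)\big|^{2/3} dt \ge \kappa \big(\sum_l c_l^2\big)^{1/3}$ for an absolute constant $\kappa > 0$. Consequently, there exists $t_0 \in [0,1]$ with $\big|\sum_l c_l s_l(t_0)\big|^{2/3} \ge \kappa (\sum_l c_l^2)^{1/3}$. -/

import Mathlib

/-!
On the dyadic interval `(k / 2^n, (k+1) / 2^n)` the sum `∑ c_l s_l` (with `c_l = 0` for `l ≥ n`)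
is constant, equal to `V_k = ∑_{j<n} b_j ε_j(k)` where `b_j = c_{n-1-j}` and
`ε_j(k) = (-1)^⌊k / 2^j⌋`; so the integral is the average of `|V_k|^{2/3}` over `k < 2^n`.
Splitting `k < 2^(n+1)` into `k` and `2^n + k` gives by induction
`∑_k V_k^2 = 2^n M` and `∑_k V_k^4 ≤ 3 · 2^n M^2`, where `M = ∑ b_j^2`.
Instead of Hölder's inequality, sum the pointwise bound `x^2 ≤ a^{2/3} |x|^{2/3} + x^4 / a` with
`a = 6M`: this gives `2^n M ≤ (6M)^{2/3} ∑_k |V_k|^{2/3} + 2^n M / 2`, hence the claim with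
`κ = 1/12`. A cell on which `|V_k|^{2/3}` is at least its average supplies `t₀`.
-/

open MeasureTheory intervalIntegral Finset

lemma sq_le_rpow_mul_rpow_add_pow_four_div {y a : ℝ} (hy : 0 ≤ y) (ha : 0 < a) :
    y ^ 2 ≤ a ^ (2 / 3 : ℝ) * y ^ (2 / 3 : ℝ) + y ^ 4 / a := by
  rcases le_or_gt (y ^ 2) a with hya | hya
  · have hsplit : y ^ 2 = (y ^ 2) ^ (2 / 3 : ℝ) * y ^ (2 / 3 : ℝ) := by
      rw [← Real.rpow_natCast, ← Real.rpow_mul hy, ← Real.rpow_add' hy (by norm_num)]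
      norm_num
    have hsmall : (y ^ 2) ^ (2 / 3 : ℝ) ≤ a ^ (2 / 3 : ℝ) :=
      Real.rpow_le_rpow (sq_nonneg y) hya (by norm_num)
    calc y ^ 2 ≤ a ^ (2 / 3 : ℝ) * y ^ (2 / 3 : ℝ) := by
          rw [hsplit]; gcongr
      _ ≤ _ := le_add_of_nonneg_right (by positivity)
  · have hlarge : y ^ 2 ≤ y ^ 4 / a := by
      rw [le_div_iff₀ ha]; nlinarith [sq_nonneg y]
    exact hlarge.trans (le_add_of_nonneg_left (by positivity))

section SignSums

def dyadicSign (j k : ℕ) : ℝ := (-1) ^ (k / 2 ^ j)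

lemma dyadicSign_of_lt {n k : ℕ} (hk : k < 2 ^ n) : dyadicSign n k = 1 := by
  rw [dyadicSign, Nat.div_eq_of_lt hk, pow_zero]

lemma dyadicSign_two_pow_add_of_lt {n k : ℕ} (hk : k < 2 ^ n) :
    dyadicSign n (2 ^ n + k) = -1 := by
  rw [dyadicSign, Nat.add_div_left _ (by positivity), Nat.div_eq_of_lt hk, zero_add, pow_one]

lemma dyadicSign_two_pow_add {j n : ℕ} (hj : j < n) (k : ℕ) :
    dyadicSign j (2 ^ n + k) = dyadicSign j k := by
  have h : 2 ^ n = 2 ^ (n - j) * 2 ^ j := by rw [← pow_add, Nat.sub_add_cancel hj.le]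
  have heven : Even (2 ^ (n - j)) := Nat.even_pow.mpr ⟨even_two, by omega⟩
  rw [dyadicSign, dyadicSign, h, add_comm, Nat.add_mul_div_right _ _ (by positivity), pow_add,
    heven.neg_one_pow, mul_one]

def signSum (b : ℕ → ℝ) (n k : ℕ) : ℝ := ∑ j ∈ range n, b j * dyadicSign j k

variable (b : ℕ → ℝ)

lemma sum_signSum_succ (g : ℝ → ℝ) (n : ℕ) :
    ∑ k ∈ range (2 ^ (n + 1)), g (signSum b (n + 1) k) =
      ∑ k ∈ range (2 ^ n), (g (signSum b n k + b n) + g (signSum b n k - b n)) := by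
  rw [pow_succ, mul_two, sum_range_add, ← sum_add_distrib]
  refine sum_congr rfl fun k hk_mem => ?_
  have hk : k < 2 ^ n := mem_range.mp hk_mem
  have hshift : signSum b n (2 ^ n + k) = signSum b n k :=
    sum_congr rfl fun j hj => by rw [dyadicSign_two_pow_add (mem_range.mp hj)]
  have hsucc (m : ℕ) : signSum b (n + 1) m = signSum b n m + b n * dyadicSign n m :=
    sum_range_succ _ _
  rw [hsucc, hsucc, hshift, dyadicSign_of_lt hk, dyadicSign_two_pow_add_of_lt hk, mul_one,
    mul_neg_one, sub_eq_add_neg]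

lemma sum_signSum_sq (n : ℕ) :
    ∑ k ∈ range (2 ^ n), signSum b n k ^ 2 = 2 ^ n * ∑ j ∈ range n, b j ^ 2 := by
  induction n with
  | zero => simp [signSum]
  | succ n ih =>
    have h (x : ℝ) : (x + b n) ^ 2 + (x - b n) ^ 2 = 2 * x ^ 2 + 2 * b n ^ 2 := by ring
    rw [sum_signSum_succ b (· ^ 2)]
    simp only [h, sum_add_distrib, ← mul_sum, ih, sum_const, card_range,
      nsmul_eq_mul, sum_range_succ]
    push_cast
    ring

lemma sum_signSum_pow_four_le (n : ℕ) :
    ∑ k ∈ range (2 ^ n), signSum b n k ^ 4 ≤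
      3 * 2 ^ n * (∑ j ∈ range n, b j ^ 2) ^ 2 := by
  induction n with
  | zero => simp [signSum]
  | succ n ih =>
    have h (x : ℝ) : (x + b n) ^ 4 + (x - b n) ^ 4 =
        2 * x ^ 4 + 12 * b n ^ 2 * x ^ 2 + 2 * b n ^ 4 := by ring
    rw [sum_signSum_succ b (· ^ 4)]
    simp only [h, sum_add_distrib, ← mul_sum, sum_signSum_sq, sum_const,
      card_range, nsmul_eq_mul, sum_range_succ]
    push_cast
    have hM : 0 ≤ ∑ j ∈ range n, b j ^ 2 := sum_nonneg fun _ _ => sq_nonneg _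
    rw [pow_succ (2 : ℝ) n]
    have h2n : (0 : ℝ) ≤ 2 ^ n := by positivity
    nlinarith [mul_nonneg h2n (pow_nonneg (sq_nonneg (b n)) 2),
      mul_nonneg h2n (mul_nonneg hM (sq_nonneg (b n)))]

lemma two_pow_mul_rpow_le_sum_abs_signSum_rpow (n : ℕ) :
    2 ^ n * (∑ j ∈ range n, b j ^ 2) ^ (1 / 3 : ℝ) ≤
      12 * ∑ k ∈ range (2 ^ n), |signSum b n k| ^ (2 / 3 : ℝ) := by
  set M := ∑ j ∈ range n, b j ^ 2
  set A := ∑ k ∈ range (2 ^ n), |signSum b n k| ^ (2 / 3 : ℝ)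
  have hA : 0 ≤ A := sum_nonneg fun _ _ => by positivity
  have hM : 0 ≤ M := sum_nonneg fun j _ => sq_nonneg (b j)
  rcases hM.eq_or_lt with hM | hM
  · rw [← hM, Real.zero_rpow (by norm_num), mul_zero]
    positivity
  have hmoments : 2 ^ n * M ≤ (6 * M) ^ (2 / 3 : ℝ) * A + 2 ^ n * M / 2 := calc
    2 ^ n * M = ∑ k ∈ range (2 ^ n), |signSum b n k| ^ 2 := by
      simp only [sq_abs, sum_signSum_sq, M]
    _ ≤ ∑ k ∈ range (2 ^ n),
        ((6 * M) ^ (2 / 3 : ℝ) * |signSum b n k| ^ (2 / 3 : ℝ) +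
          |signSum b n k| ^ 4 / (6 * M)) :=
      sum_le_sum fun k _ => sq_le_rpow_mul_rpow_add_pow_four_div (abs_nonneg _) (by positivity)
    _ = (6 * M) ^ (2 / 3 : ℝ) * A + (∑ k ∈ range (2 ^ n), signSum b n k ^ 4) / (6 * M) := by
      simp only [sum_add_distrib, ← mul_sum, ← sum_div, (by decide : Even 4).pow_abs, A]
    _ ≤ (6 * M) ^ (2 / 3 : ℝ) * A + 3 * 2 ^ n * M ^ 2 / (6 * M) := by
      gcongr
      exact sum_signSum_pow_four_le b n
    _ = (6 * M) ^ (2 / 3 : ℝ) * A + 2 ^ n * M / 2 := by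
      field_simp
      ring
  have hsix : (6 : ℝ) ^ (2 / 3 : ℝ) ≤ 6 :=
    Real.rpow_le_self_of_one_le (by norm_num) (by norm_num)
  have hsplit : M = M ^ (1 / 3 : ℝ) * M ^ (2 / 3 : ℝ) := by
    rw [← Real.rpow_add hM]; norm_num
  rw [Real.mul_rpow (by norm_num) hM.le] at hmoments
  refine le_of_mul_le_mul_right ?_ (Real.rpow_pos_of_pos hM (2 / 3 : ℝ))
  rw [mul_assoc, ← hsplit]
  nlinarith [mul_le_mul_of_nonneg_right hsix (mul_nonneg (Real.rpow_nonneg hM.le (2 / 3 : ℝ)) hA)]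

end SignSums

lemma sign_sin_pi_mul_eq_neg_one_pow {q : ℕ} {x : ℝ} (hx : x ∈ Set.Ioo (q : ℝ) (q + 1)) :
    Real.sign (Real.sin (Real.pi * x)) = (-1) ^ q := by
  have hpos : 0 < Real.sin (Real.pi * (x - q)) :=
    Real.sin_pos_of_pos_of_lt_pi (by nlinarith [hx.1, Real.pi_pos])
      (by nlinarith [hx.2, Real.pi_pos])
  rw [show Real.pi * x = Real.pi * (x - q) + q * Real.pi by ring, Real.sin_add_nat_mul_pi]
  rcases q.even_or_odd with hq | hq
  · rw [hq.neg_one_pow, one_mul, Real.sign_of_pos hpos]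
  · rw [hq.neg_one_pow, neg_one_mul, Real.sign_of_neg (neg_lt_zero.mpr hpos)]

lemma div_mem_Ioo_nat_div {k m : ℕ} (hm : 0 < m) {x : ℝ}
    (hx : x ∈ Set.Ioo (k : ℝ) (k + 1)) :
    x / m ∈ Set.Ioo ((k / m : ℕ) : ℝ) ((k / m : ℕ) + 1) := by
  have hm' : (0 : ℝ) < m := by exact_mod_cast hm
  have hlow : ((k / m * m : ℕ) : ℝ) ≤ k := by exact_mod_cast Nat.div_mul_le_self k m
  have hhigh : ((k + 1 : ℕ) : ℝ) ≤ ((k / m + 1) * m : ℕ) := by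
    exact_mod_cast (by nlinarith [Nat.lt_div_mul_add (a := k) hm] : k + 1 ≤ (k / m + 1) * m)
  push_cast at hlow hhigh
  constructor
  · rw [lt_div_iff₀ hm']; linarith [hx.1]
  · rw [div_lt_iff₀ hm']; linarith [hx.2]

lemma sign_sin_two_pow_mul_eq_dyadicSign {n l k : ℕ} (hl : l < n) {t : ℝ}
    (ht : t ∈ Set.Ioo ((k : ℝ) / 2 ^ n) ((k + 1) / 2 ^ n)) :
    Real.sign (Real.sin (2 ^ (l + 1) * Real.pi * t)) = dyadicSign (n - 1 - l) k := by
  have hn : (2 : ℝ) ^ n = 2 ^ (l + 1) * 2 ^ (n - 1 - l) := by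
    rw [← pow_add]; congr 1; omega
  have hcell : 2 ^ n * t ∈ Set.Ioo (k : ℝ) (k + 1) := by
    constructor
    · rw [← div_lt_iff₀' (by positivity)]; exact ht.1
    · rw [← lt_div_iff₀' (by positivity)]; exact ht.2
  have hx := div_mem_Ioo_nat_div (Nat.two_pow_pos (n - 1 - l)) hcell
  rw [Nat.cast_pow, Nat.cast_ofNat, hn, mul_right_comm,
    mul_div_cancel_right₀ _ (by positivity)] at hx
  rw [mul_comm _ Real.pi, mul_assoc, sign_sin_pi_mul_eq_neg_one_pow hx, dyadicSign]

lemma eventuallyEq_restrict_uIoc_of_eqOn_Ioo {F : ℝ → ℝ} {a b v : ℝ} (hab : a ≤ b)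
    (hF : Set.EqOn F (fun _ => v) (Set.Ioo a b)) :
    F =ᵐ[volume.restrict (Set.uIoc a b)] fun _ => v := by
  rw [Set.uIoc_of_le hab, Filter.EventuallyEq, ae_restrict_iff' measurableSet_Ioc]
  filter_upwards [Measure.ae_ne volume b] with t htb ht
  exact hF ⟨ht.1, ht.2.lt_of_ne htb⟩

lemma integral_zero_one_eq_sum_div {N : ℕ} (hN : 0 < N) {F : ℝ → ℝ} {v : ℕ → ℝ}
    (hF : ∀ k < N, Set.EqOn F (fun _ => v k) (Set.Ioo ((k : ℝ) / N) ((k + 1) / N))) :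
    ∫ t in (0 : ℝ)..1, F t = (∑ k ∈ range N, v k) / N := by
  have hN' : (0 : ℝ) < N := by exact_mod_cast hN
  have hae (k : ℕ) (hk : k < N) :
      F =ᵐ[volume.restrict (Set.uIoc ((k : ℝ) / N) ((k + 1 : ℕ) / N))] fun _ => v k :=
    eventuallyEq_restrict_uIoc_of_eqOn_Ioo (by gcongr; simp) (by push_cast; exact hF k hk)
  have hsum := sum_integral_adjacent_intervals (a := fun k : ℕ => (k : ℝ) / N)
    fun k hk => intervalIntegrable_const.congr_ae (hae k hk).symm
  simp only [Nat.cast_zero, zero_div, div_self hN'.ne'] at hsum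
  rw [← hsum, sum_div]
  refine sum_congr rfl fun k hk => ?_
  rw [integral_congr_ae_restrict (hae k (mem_range.mp hk)), intervalIntegral.integral_const,
    smul_eq_mul]
  field_simp
  push_cast
  ring

lemma exists_le_of_eqOn_cells {N : ℕ} (hN : 0 < N) {F : ℝ → ℝ} {v : ℕ → ℝ}
    (hF : ∀ k < N, Set.EqOn F (fun _ => v k) (Set.Ioo ((k : ℝ) / N) ((k + 1) / N))) {m : ℝ}
    (hm : N * m ≤ ∑ k ∈ range N, v k) : ∃ t ∈ Set.Icc (0 : ℝ) 1, m ≤ F t := by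
  obtain ⟨k, hk, hmk⟩ := exists_le_of_sum_le (f := fun _ => m) (g := v)
    (nonempty_range_iff.mpr hN.ne')
    (by rwa [sum_const, card_range, nsmul_eq_mul])
  have hk' : (k : ℝ) + 1 ≤ N := by exact_mod_cast mem_range.mp hk
  have hN' : (0 : ℝ) < N := by exact_mod_cast hN
  have hmid : ((k : ℝ) + 1 / 2) / N ∈ Set.Ioo ((k : ℝ) / N) ((k + 1) / N) :=
    ⟨by gcongr; linarith, by gcongr; linarith⟩
  refine ⟨((k : ℝ) + 1 / 2) / N, ⟨by positivity, ?_⟩, ?_⟩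
  · rw [div_le_one hN']; linarith
  · rw [hF k (mem_range.mp hk) hmid]; exact hmk

noncomputable def rademacher (l : ℕ) (t : ℝ) : ℝ :=
  Real.sign (Real.sin (2 ^ (l + 1) * Real.pi * t))

section FiniteRademacherSums

variable {c : ℕ → ℝ} {n : ℕ}

lemma tsum_eq_sum_range_of_vanish (hc : ∀ l, n ≤ l → c l = 0) {f : ℕ → ℝ}
    (hf : ∀ l, c l = 0 → f l = 0) :
    ∑' l, f l = ∑ l ∈ range n, f l :=
  tsum_eq_sum fun l hl => hf l (hc l (by simpa using hl))

lemma tsum_sq_eq_sum_reflect (hc : ∀ l, n ≤ l → c l = 0) :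
    ∑' l, c l ^ 2 = ∑ j ∈ range n, c (n - 1 - j) ^ 2 := by
  rw [tsum_eq_sum_range_of_vanish hc fun l h => by simp [h]]
  exact (sum_range_reflect (fun l => c l ^ 2) n).symm

lemma tsum_mul_rademacher_eq_signSum (hc : ∀ l, n ≤ l → c l = 0) {k : ℕ} {t : ℝ}
    (ht : t ∈ Set.Ioo ((k : ℝ) / 2 ^ n) ((k + 1) / 2 ^ n)) :
    ∑' l, c l * rademacher l t = signSum (fun j => c (n - 1 - j)) n k := by
  rw [tsum_eq_sum_range_of_vanish hc fun l h => by simp [h], signSum,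
    ← sum_range_reflect (fun j => c (n - 1 - j) * dyadicSign j k) n]
  refine sum_congr rfl fun l hl => ?_
  have hl := mem_range.mp hl
  rw [show n - 1 - (n - 1 - l) = l by omega, rademacher,
    sign_sin_two_pow_mul_eq_dyadicSign hl ht]

end FiniteRademacherSums

/-- Khinchin lower bound for exponent `2/3`: with `s_l(t) = sign(sin(2^l π t))` the
Rademacher functions, `∫₀¹ |∑ c_l s_l(t)|^{2/3} dt ≥ κ (∑ c_l²)^{1/3}` for an absolute
`κ > 0`; consequently some `t₀ ∈ [0,1]` achieves this bound pointwise. -/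
theorem stmt14 :
    ∃ κ > (0 : ℝ), ∀ c : ℕ → ℝ, (Function.support c).Finite →
      let s : ℕ → ℝ → ℝ := fun l t => Real.sign (Real.sin (2 ^ (l + 1) * Real.pi * t))
      κ * (∑' l, c l ^ 2) ^ ((1 : ℝ) / 3) ≤
          (∫ t in (0 : ℝ)..1, |∑' l, c l * s l t| ^ ((2 : ℝ) / 3)) ∧
        ∃ t₀ ∈ Set.Icc (0 : ℝ) 1,
          κ * (∑' l, c l ^ 2) ^ ((1 : ℝ) / 3) ≤ |∑' l, c l * s l t₀| ^ ((2 : ℝ) / 3) := by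
  refine ⟨1 / 12, by norm_num, fun c hc => ?_⟩
  intro s
  obtain ⟨n, hn⟩ : ∃ n, ∀ l, n ≤ l → c l = 0 := by
    obtain ⟨m, hm⟩ := hc.bddAbove
    exact ⟨m + 1, fun l hl => Function.notMem_support.mp fun h => by have := hm h; omega⟩
  set b : ℕ → ℝ := fun j => c (n - 1 - j)
  have hcells : ∀ k < 2 ^ n, Set.EqOn (fun t => |∑' l, c l * s l t| ^ ((2 : ℝ) / 3))
      (fun _ => |signSum b n k| ^ ((2 : ℝ) / 3))
      (Set.Ioo ((k : ℝ) / (2 ^ n : ℕ)) ((k + 1) / (2 ^ n : ℕ))) := fun k _ t ht => by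
    push_cast at ht
    exact congrArg (|·| ^ ((2 : ℝ) / 3)) (tsum_mul_rademacher_eq_signSum hn ht)
  have hbound : ((2 ^ n : ℕ) : ℝ) * (1 / 12 * (∑' l, c l ^ 2) ^ ((1 : ℝ) / 3)) ≤
      ∑ k ∈ range (2 ^ n), |signSum b n k| ^ ((2 : ℝ) / 3) := by
    rw [tsum_sq_eq_sum_reflect hn]
    push_cast
    linarith [two_pow_mul_rpow_le_sum_abs_signSum_rpow b n]
  refine ⟨?_, exists_le_of_eqOn_cells (by positivity) hcells hbound⟩
  rw [integral_zero_one_eq_sum_div (by positivity) hcells, le_div_iff₀ (by positivity)]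
  linarith
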